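/- arXiv:1810.05355 — 6 statements merged into one kernel-verified Lean document; each statement's English description precedes it below -/
import Mathlib

section
/- If P is a polynomial with non-negative coefficients, homogeneous of degree d, in variables x_{ij} (i=1..k, j=1..n_i), and x is a point of the product of simplices D where all relevant denominators are nonzero, then the Baum–Eagon map T defined by T(x)_{ij} = x_{ij}·(∂P/∂x_{ij}) / Σ_h x_{ih}·(∂P/∂x_{ih}) satisfies P(T(x)) ≥ P(x), with equality only if T(x) = x. -/
/-!
Write `P(x) = ∑ₘ cₘ xᵐ` and `A_a = x_a ∂_a P(x) = ∑ₘ cₘ xᵐ m_a`. Jensen's inequality for `exp`,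
with the weights `cₘ xᵐ / P(x)`, gives `P(y) ≥ P(x) exp ((∑_a A_a ℓ_a) / P(x))` whenever
`y_a ≥ x_a exp ℓ_a` for every variable with `A_a ≠ 0`. Take `y = T(x)` and
`ℓ_a = log T_a - log x_a`. Since `A_{ij} = S_i T_{ij}` with `S_i = ∑_h A_{ih} > 0`, the exponent
is `∑ᵢ S_i KL(T_{i·} ‖ x_{i·}) / P(x)`, which is nonnegative by Gibbs' inequality and vanishes
only if `T(x) = x`.
-/

open MvPolynomial

/-- The Baum–Eagon map associated to a multivariate polynomial `P` on a product of
simplices indexed by `Σ i : Fin k, Fin (n i)`: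
`T(x)_{ij} = x_{ij} ∂P/∂x_{ij}(x) / ∑_h x_{ih} ∂P/∂x_{ih}(x)`. -/
noncomputable def baumEagonMap {k : ℕ} {n : Fin k → ℕ}
    (P : MvPolynomial (Σ i : Fin k, Fin (n i)) ℝ)
    (x : (Σ i : Fin k, Fin (n i)) → ℝ) : (Σ i : Fin k, Fin (n i)) → ℝ :=
  fun a => x a * eval x (pderiv a P) /
    ∑ h : Fin (n a.1), x ⟨a.1, h⟩ * eval x (pderiv (⟨a.1, h⟩ : Σ i, Fin (n i)) P)

open Real InformationTheory

namespace MvPolynomial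

variable {σ : Type*} [Fintype σ] {P : MvPolynomial σ ℝ} {x : σ → ℝ}

theorem mul_eval_pderiv_eq_sum (a : σ) :
    x a * eval x (pderiv a P) = ∑ m ∈ P.support, coeff m P * (∏ b, x b ^ m b) * m a := by
  have hX : X a * pderiv a P = ∑ m ∈ P.support, m a • monomial m (coeff m P) := by
    conv_lhs => rw [P.as_sum]
    simp only [map_sum, Finset.mul_sum, X_mul_pderiv_monomial]
  simpa [eval_monomial, Finsupp.prod_fintype, mul_comm, mul_left_comm] using congrArg (eval x) hX

theorem coeff_mul_prod_pow_nonneg (hcoeff : ∀ m, 0 ≤ coeff m P) (hx : ∀ a, 0 ≤ x a)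
    (m : σ →₀ ℕ) : 0 ≤ coeff m P * ∏ b, x b ^ m b :=
  mul_nonneg (hcoeff m) (Finset.prod_nonneg fun b _ => pow_nonneg (hx b) _)

theorem coeff_mul_prod_pow_le_eval (hcoeff : ∀ m, 0 ≤ coeff m P) (hx : ∀ a, 0 ≤ x a)
    (m : σ →₀ ℕ) : coeff m P * ∏ b, x b ^ m b ≤ eval x P := by
  rw [eval_eq']
  by_cases hm : m ∈ P.support
  · exact Finset.single_le_sum (fun m' _ => coeff_mul_prod_pow_nonneg hcoeff hx m') hm
  · rw [notMem_support_iff.mp hm, zero_mul]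
    exact Finset.sum_nonneg fun m' _ => coeff_mul_prod_pow_nonneg hcoeff hx m'

theorem coeff_mul_prod_pow_mul_le_mul_eval_pderiv (hcoeff : ∀ m, 0 ≤ coeff m P)
    (hx : ∀ a, 0 ≤ x a) (m : σ →₀ ℕ) (a : σ) :
    coeff m P * (∏ b, x b ^ m b) * m a ≤ x a * eval x (pderiv a P) := by
  have hterm m' : 0 ≤ coeff m' P * (∏ b, x b ^ m' b) * m' a :=
    mul_nonneg (coeff_mul_prod_pow_nonneg hcoeff hx m') (Nat.cast_nonneg _)
  rw [mul_eval_pderiv_eq_sum]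
  by_cases hm : m ∈ P.support
  · exact Finset.single_le_sum (fun m' _ => hterm m') hm
  · rw [notMem_support_iff.mp hm, zero_mul, zero_mul]
    exact Finset.sum_nonneg fun m' _ => hterm m'

theorem mul_eval_pderiv_nonneg (hcoeff : ∀ m, 0 ≤ coeff m P) (hx : ∀ a, 0 ≤ x a) (a : σ) :
    0 ≤ x a * eval x (pderiv a P) := by
  simpa using coeff_mul_prod_pow_mul_le_mul_eval_pderiv hcoeff hx 0 a

theorem eval_pos_of_mul_eval_pderiv_ne_zero (hcoeff : ∀ m, 0 ≤ coeff m P) (hx : ∀ a, 0 ≤ x a)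
    {a : σ} (ha : x a * eval x (pderiv a P) ≠ 0) : 0 < eval x P := by
  rw [mul_eval_pderiv_eq_sum] at ha
  obtain ⟨m, -, hm⟩ := Finset.exists_ne_zero_of_sum_ne_zero ha
  have hWpos := (coeff_mul_prod_pow_nonneg hcoeff hx m).lt_of_ne' (left_ne_zero_of_mul hm)
  exact hWpos.trans_le (coeff_mul_prod_pow_le_eval hcoeff hx m)

theorem eval_mul_exp_le_sum (hcoeff : ∀ m, 0 ≤ coeff m P) (hx : ∀ a, 0 ≤ x a)
    (hP : 0 < eval x P) (ℓ : σ → ℝ) :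
    eval x P * exp ((∑ a, x a * eval x (pderiv a P) * ℓ a) / eval x P) ≤
      ∑ m ∈ P.support, coeff m P * (∏ b, x b ^ m b) * exp (∑ b, m b * ℓ b) := by
  set w : (σ →₀ ℕ) → ℝ := fun m => coeff m P * (∏ b, x b ^ m b) / eval x P
  have hw1 : ∑ m ∈ P.support, w m = 1 := by
    rw [← Finset.sum_div, ← eval_eq', div_self hP.ne']
  have hmean : (∑ a, x a * eval x (pderiv a P) * ℓ a) / eval x P =
      ∑ m ∈ P.support, w m • ∑ b, m b * ℓ b := by
    simp only [mul_eval_pderiv_eq_sum, Finset.sum_mul, smul_eq_mul, w]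
    rw [Finset.sum_comm, Finset.sum_div]
    refine Finset.sum_congr rfl fun m _ => ?_
    rw [Finset.mul_sum, Finset.sum_div]
    exact Finset.sum_congr rfl fun b _ => by ring
  have hjensen := convexOn_exp.map_sum_le (p := fun m => ∑ b, m b * ℓ b)
    (fun m _ => div_nonneg (coeff_mul_prod_pow_nonneg hcoeff hx m) hP.le) hw1
    (fun _ _ => Set.mem_univ _)
  rw [hmean, ← le_div_iff₀' hP]
  refine hjensen.trans_eq ?_
  simp only [smul_eq_mul, Finset.sum_div]
  exact Finset.sum_congr rfl fun m _ => by ring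

/-- Monomials with `cₘ xᵐ ≠ 0` only involve variables with `x_a ∂_a P(x) ≠ 0`, so `y` needs to
dominate `x_a exp ℓ_a` only there. -/
theorem sum_mul_exp_le_eval (hcoeff : ∀ m, 0 ≤ coeff m P) (hx : ∀ a, 0 ≤ x a)
    {y : σ → ℝ} (hy : ∀ a, 0 ≤ y a) {ℓ : σ → ℝ}
    (hℓ : ∀ a, x a * eval x (pderiv a P) ≠ 0 → x a * exp (ℓ a) ≤ y a) :
    ∑ m ∈ P.support, coeff m P * (∏ b, x b ^ m b) * exp (∑ b, m b * ℓ b) ≤ eval y P := by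
  rw [eval_eq']
  refine Finset.sum_le_sum fun m _ => ?_
  by_cases hW : coeff m P * ∏ b, x b ^ m b = 0
  · rw [hW, zero_mul]
    exact coeff_mul_prod_pow_nonneg hcoeff hy m
  have hWpos := (coeff_mul_prod_pow_nonneg hcoeff hx m).lt_of_ne' hW
  simp only [exp_sum, exp_nat_mul, mul_assoc, ← Finset.prod_mul_distrib, ← mul_pow]
  refine mul_le_mul_of_nonneg_left (Finset.prod_le_prod (fun b _ => ?_) fun b _ => ?_) (hcoeff m)
  · exact pow_nonneg (mul_nonneg (hx b) (exp_pos _).le) _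
  rcases eq_or_ne (m b) 0 with hb | hb
  · simp [hb]
  refine pow_le_pow_left₀ (mul_nonneg (hx b) (exp_pos _).le) (hℓ b (ne_of_gt ?_)) _
  exact (mul_pos hWpos (Nat.cast_pos.mpr (Nat.pos_of_ne_zero hb))).trans_le
    (coeff_mul_prod_pow_mul_le_mul_eval_pderiv hcoeff hx m b)

end MvPolynomial

section Gibbs

theorem mul_log_sub_log_eq_sub_add_mul_klFun {p q : ℝ} (h : q = 0 → p = 0) :
    p * (log p - log q) = p - q + q * klFun (p / q) := by
  rcases eq_or_ne q 0 with hq | hq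
  · simp [hq, h hq]
  rcases eq_or_ne p 0 with hp | hp
  · simp [hp, klFun_zero]
  rw [klFun_apply, log_div hp hq]
  field_simp
  ring

variable {ι : Type*} [Fintype ι] {p q : ι → ℝ}

theorem sum_mul_log_sub_log_eq (hpq : ∀ j, q j = 0 → p j = 0) :
    ∑ j, p j * (log (p j) - log (q j)) =
      (∑ j, p j - ∑ j, q j) + ∑ j, q j * klFun (p j / q j) := by
  simp only [mul_log_sub_log_eq_sub_add_mul_klFun (hpq _), Finset.sum_add_distrib,
    Finset.sum_sub_distrib]

theorem sum_mul_log_sub_log_nonneg (hp : ∀ j, 0 ≤ p j) (hq : ∀ j, 0 ≤ q j)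
    (hpq : ∀ j, q j = 0 → p j = 0) (hsum : ∑ j, q j ≤ ∑ j, p j) :
    0 ≤ ∑ j, p j * (log (p j) - log (q j)) := by
  rw [sum_mul_log_sub_log_eq hpq]
  exact add_nonneg (sub_nonneg.mpr hsum) (Finset.sum_nonneg fun j _ =>
    mul_nonneg (hq j) (klFun_nonneg (div_nonneg (hp j) (hq j))))

theorem sum_mul_log_sub_log_pos (hp : ∀ j, 0 ≤ p j) (hq : ∀ j, 0 ≤ q j)
    (hpq : ∀ j, q j = 0 → p j = 0) (hsum : ∑ j, q j ≤ ∑ j, p j) (hne : p ≠ q) :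
    0 < ∑ j, p j * (log (p j) - log (q j)) := by
  rw [sum_mul_log_sub_log_eq hpq]
  refine add_pos_of_nonneg_of_pos (sub_nonneg.mpr hsum) (Finset.sum_pos' (fun j _ =>
    mul_nonneg (hq j) (klFun_nonneg (div_nonneg (hp j) (hq j)))) ?_)
  obtain ⟨j, hj⟩ := Function.ne_iff.mp hne
  have hqj : q j ≠ 0 := fun h => hj (by rw [h, hpq j h])
  refine ⟨j, Finset.mem_univ j, mul_pos ((hq j).lt_of_ne' hqj) ?_⟩
  refine (klFun_nonneg (div_nonneg (hp j) (hq j))).lt_of_ne' fun h => hj ?_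
  exact (div_eq_one_iff_eq hqj).mp ((klFun_eq_zero_iff (div_nonneg (hp j) (hq j))).mp h)

end Gibbs

section BaumEagon

variable {k : ℕ} {n : Fin k → ℕ} {P : MvPolynomial (Σ i : Fin k, Fin (n i)) ℝ}
  {x : (Σ i : Fin k, Fin (n i)) → ℝ}

noncomputable def baumEagonNormalizer (P : MvPolynomial (Σ i : Fin k, Fin (n i)) ℝ)
    (x : (Σ i : Fin k, Fin (n i)) → ℝ) (i : Fin k) : ℝ :=
  ∑ h : Fin (n i), x ⟨i, h⟩ * eval x (pderiv (⟨i, h⟩ : Σ i, Fin (n i)) P)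

theorem baumEagonMap_apply (a : Σ i : Fin k, Fin (n i)) :
    baumEagonMap P x a = x a * eval x (pderiv a P) / baumEagonNormalizer P x a.1 :=
  rfl

theorem baumEagonMap_nonneg (hcoeff : ∀ m, 0 ≤ coeff m P) (hx : ∀ a, 0 ≤ x a) (a) :
    0 ≤ baumEagonMap P x a :=
  div_nonneg (mul_eval_pderiv_nonneg hcoeff hx a)
    (Finset.sum_nonneg fun _ _ => mul_eval_pderiv_nonneg hcoeff hx _)

theorem baumEagonMap_eq_zero_of_eq_zero {a} (ha : x a = 0) : baumEagonMap P x a = 0 := by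
  rw [baumEagonMap_apply, ha, zero_mul, zero_div]

theorem baumEagonMap_pos (hcoeff : ∀ m, 0 ≤ coeff m P) (hx : ∀ a, 0 ≤ x a) {a}
    (ha : x a * eval x (pderiv a P) ≠ 0) (hden : baumEagonNormalizer P x a.1 ≠ 0) :
    0 < baumEagonMap P x a :=
  (baumEagonMap_nonneg hcoeff hx a).lt_of_ne' (div_ne_zero ha hden)

theorem sum_baumEagonMap {i : Fin k} (hi : baumEagonNormalizer P x i ≠ 0) :
    ∑ j, baumEagonMap P x ⟨i, j⟩ = 1 :=
  (Finset.sum_div _ _ _).symm.trans (div_self hi)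

noncomputable def baumEagonDivergence (P : MvPolynomial (Σ i : Fin k, Fin (n i)) ℝ)
    (x : (Σ i : Fin k, Fin (n i)) → ℝ) : ℝ :=
  ∑ a, x a * eval x (pderiv a P) * (log (baumEagonMap P x a) - log (x a))

theorem baumEagonDivergence_eq (hden : ∀ i, baumEagonNormalizer P x i ≠ 0) :
    baumEagonDivergence P x = ∑ i, baumEagonNormalizer P x i *
      ∑ j, baumEagonMap P x ⟨i, j⟩ * (log (baumEagonMap P x ⟨i, j⟩) - log (x ⟨i, j⟩)) := by
  rw [baumEagonDivergence, Fintype.sum_sigma]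
  refine Finset.sum_congr rfl fun i _ => ?_
  rw [Finset.mul_sum]
  refine Finset.sum_congr rfl fun j _ => ?_
  rw [baumEagonMap_apply]
  field_simp [hden i]

theorem baumEagonDivergence_nonneg (hcoeff : ∀ m, 0 ≤ coeff m P) (hx : ∀ a, 0 ≤ x a)
    (hx1 : ∀ i : Fin k, ∑ j : Fin (n i), x ⟨i, j⟩ = 1)
    (hden : ∀ i, 0 < baumEagonNormalizer P x i) :
    0 ≤ baumEagonDivergence P x := by
  rw [baumEagonDivergence_eq fun i => (hden i).ne']
  refine Finset.sum_nonneg fun i _ => mul_nonneg (hden i).le ?_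
  exact sum_mul_log_sub_log_nonneg (fun _ => baumEagonMap_nonneg hcoeff hx _) (fun _ => hx _)
    (fun _ => baumEagonMap_eq_zero_of_eq_zero) (by rw [sum_baumEagonMap (hden i).ne', hx1 i])

theorem baumEagonDivergence_pos (hcoeff : ∀ m, 0 ≤ coeff m P) (hx : ∀ a, 0 ≤ x a)
    (hx1 : ∀ i : Fin k, ∑ j : Fin (n i), x ⟨i, j⟩ = 1)
    (hden : ∀ i, 0 < baumEagonNormalizer P x i) (hne : baumEagonMap P x ≠ x) :
    0 < baumEagonDivergence P x := by
  obtain ⟨⟨i, j⟩, hij⟩ := Function.ne_iff.mp hne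
  rw [baumEagonDivergence_eq fun i => (hden i).ne']
  refine Finset.sum_pos' (fun i _ => mul_nonneg (hden i).le ?_)
    ⟨i, Finset.mem_univ i, mul_pos (hden i) ?_⟩
  · exact sum_mul_log_sub_log_nonneg (fun _ => baumEagonMap_nonneg hcoeff hx _) (fun _ => hx _)
      (fun _ => baumEagonMap_eq_zero_of_eq_zero) (by rw [sum_baumEagonMap (hden i).ne', hx1 i])
  · exact sum_mul_log_sub_log_pos (fun _ => baumEagonMap_nonneg hcoeff hx _) (fun _ => hx _)
      (fun _ => baumEagonMap_eq_zero_of_eq_zero) (by rw [sum_baumEagonMap (hden i).ne', hx1 i])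
      fun h => hij (congrFun h j)

theorem eval_mul_exp_baumEagonDivergence_le (hcoeff : ∀ m, 0 ≤ coeff m P) (hx : ∀ a, 0 ≤ x a)
    (hden : ∀ i, baumEagonNormalizer P x i ≠ 0) (hP : 0 < eval x P) :
    eval x P * exp (baumEagonDivergence P x / eval x P) ≤ eval (baumEagonMap P x) P := by
  refine (eval_mul_exp_le_sum hcoeff hx hP _).trans
    (sum_mul_exp_le_eval hcoeff hx (baumEagonMap_nonneg hcoeff hx) fun a ha => ?_)
  have hxa : 0 < x a := (hx a).lt_of_ne' (left_ne_zero_of_mul ha)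
  have hTa := baumEagonMap_pos hcoeff hx ha (hden a.1)
  rw [exp_sub, exp_log hTa, exp_log hxa, mul_div_cancel₀ _ hxa.ne']

end BaumEagon

theorem baum_eagon_inequality_general (k : ℕ) (n : Fin k → ℕ)
    (P : MvPolynomial (Σ i : Fin k, Fin (n i)) ℝ)
    (hcoeff : ∀ m, 0 ≤ P.coeff m)
    (x : (Σ i : Fin k, Fin (n i)) → ℝ)
    (hx0 : ∀ a, 0 ≤ x a)
    (hx1 : ∀ i : Fin k, ∑ j : Fin (n i), x ⟨i, j⟩ = 1)
    (hden : ∀ i : Fin k,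
      0 < ∑ h : Fin (n i), x ⟨i, h⟩ * eval x (pderiv (⟨i, h⟩ : Σ i, Fin (n i)) P)) :
    eval x P ≤ eval (baumEagonMap P x) P ∧
      (eval (baumEagonMap P x) P = eval x P → baumEagonMap P x = x) := by
  rcases isEmpty_or_nonempty (Fin k) with hk | ⟨⟨i⟩⟩
  · have hT : baumEagonMap P x = x := funext fun a => isEmptyElim a.1
    simp [hT]
  obtain ⟨j, -, hj⟩ := Finset.exists_ne_zero_of_sum_ne_zero (hden i).ne'
  have hP : 0 < eval x P := eval_pos_of_mul_eval_pderiv_ne_zero hcoeff hx0 hj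
  have hkey := eval_mul_exp_baumEagonDivergence_le hcoeff hx0 (fun i => (hden i).ne') hP
  have hle : eval x P ≤ eval x P * exp (baumEagonDivergence P x / eval x P) :=
    le_mul_of_one_le_right hP.le
      (one_le_exp (div_nonneg (baumEagonDivergence_nonneg hcoeff hx0 hx1 hden) hP.le))
  refine ⟨hle.trans hkey, fun heq => ?_⟩
  by_contra hne
  have hlt : eval x P < eval x P * exp (baumEagonDivergence P x / eval x P) :=
    lt_mul_of_one_lt_right hP
      (one_lt_exp_iff.mpr (div_pos (baumEagonDivergence_pos hcoeff hx0 hx1 hden hne) hP))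
  linarith

/-- **Baum–Eagon inequality.** If `P` is a polynomial with non-negative coefficients,
homogeneous of degree `d`, in variables `x i j` (`i : Fin k`, `j : Fin (n i)`), and `x`
is a point of the product of simplices `D` where all denominators are positive, then
the Baum–Eagon map `T` satisfies `P (T x) ≥ P x`, with equality only if `T x = x`. -/
theorem baum_eagon_inequality (k : ℕ) (n : Fin k → ℕ) (d : ℕ)
    (P : MvPolynomial (Σ i : Fin k, Fin (n i)) ℝ)
    (hcoeff : ∀ m, 0 ≤ P.coeff m)
    (hhom : P.IsHomogeneous d)
    (x : (Σ i : Fin k, Fin (n i)) → ℝ)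
    (hx0 : ∀ a, 0 ≤ x a)
    (hx1 : ∀ i : Fin k, ∑ j : Fin (n i), x ⟨i, j⟩ = 1)
    (hden : ∀ i : Fin k,
      0 < ∑ h : Fin (n i), x ⟨i, h⟩ * eval x (pderiv (⟨i, h⟩ : Σ i, Fin (n i)) P)) :
    eval x P ≤ eval (baumEagonMap P x) P ∧
      (eval (baumEagonMap P x) P = eval x P → baumEagonMap P x = x) :=
  baum_eagon_inequality_general k n P hcoeff x hx0 hx1 hden
end

section
/- For the polynomial P(x₁,x₂) = x₁ + x₁⁷x₂ + x₂⁷ on the 1-simplex {(x₁,x₂) : x₁,x₂ ≥ 0, x₁+x₂=1}, the function k(x₁) = (x₁ ∂P/∂x₁)/(x₂ ∂P/∂x₂) = (x₁ + 7x₁⁷(1−x₁)) / (x₁⁷(1−x₁) + 7(1−x₁)⁷) is not monotone on (0,1); consequently the associated Baum–Eagon map on the 1-simplex is not injective. -/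
open Set

/-- The ratio `k(x₁) = x₁ ∂P/∂x₁ / (x₂ ∂P/∂x₂)` for `P = x₁ + x₁⁷x₂ + x₂⁷`
with `x₂ = 1 - x₁`. -/
noncomputable def ratioK (x : ℝ) : ℝ :=
  (x + 7 * x ^ 7 * (1 - x)) / (x ^ 7 * (1 - x) + 7 * (1 - x) ^ 7)

/-- The Baum–Eagon map on the 1-simplex for `P = x₁ + x₁⁷x₂ + x₂⁷`:
`τ(x₁,x₂) = (x₁ ∂P/∂x₁, x₂ ∂P/∂x₂) / (x₁ ∂P/∂x₁ + x₂ ∂P/∂x₂)`. -/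
noncomputable def tauBE (p : ℝ × ℝ) : ℝ × ℝ :=
  ((p.1 + 7 * p.1 ^ 7 * p.2) / ((p.1 + 7 * p.1 ^ 7 * p.2) + (p.1 ^ 7 * p.2 + 7 * p.2 ^ 7)),
   (p.1 ^ 7 * p.2 + 7 * p.2 ^ 7) / ((p.1 + 7 * p.1 ^ 7 * p.2) + (p.1 ^ 7 * p.2 + 7 * p.2 ^ 7)))

lemma denpos {x : ℝ} (h1 : 0 < x) (h2 : x < 1) :
    0 < x ^ 7 * (1 - x) + 7 * (1 - x) ^ 7 := by
  have h3 : 0 < 1 - x := by linarith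
  have := pow_pos h1 7
  have := pow_pos h3 7
  nlinarith

lemma contK {a b : ℝ} (ha : 0 < a) (hb : b < 1) :
    ContinuousOn ratioK (Icc a b) := by
  apply ContinuousOn.div (by fun_prop) (by fun_prop)
  intro x hx
  exact ne_of_gt (denpos (lt_of_lt_of_le ha hx.1) (lt_of_le_of_lt hx.2 hb))

/-- For `P(x₁,x₂) = x₁ + x₁⁷x₂ + x₂⁷` on the 1-simplex, the ratio
`k(x₁) = (x₁ + 7x₁⁷(1−x₁)) / (x₁⁷(1−x₁) + 7(1−x₁)⁷)` is not monotone on `(0,1)`;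
consequently the associated Baum–Eagon map is not injective on the simplex. -/
theorem ratioK_not_monotone_and_tauBE_not_injective :
    (¬ MonotoneOn ratioK (Ioo (0 : ℝ) 1) ∧ ¬ AntitoneOn ratioK (Ioo (0 : ℝ) 1)) ∧
      ¬ Set.InjOn tauBE {p : ℝ × ℝ | 0 ≤ p.1 ∧ 0 ≤ p.2 ∧ p.1 + p.2 = 1} := by
  have d1 : (0:ℝ) < (13/20:ℝ) ^ 7 * (1 - 13/20) + 7 * (1 - 13/20) ^ 7 := by norm_num
  have d2 : (0:ℝ) < (43/50:ℝ) ^ 7 * (1 - 43/50) + 7 * (1 - 43/50) ^ 7 := by norm_num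
  have d3 : (0:ℝ) < (1/2:ℝ) ^ 7 * (1 - 1/2) + 7 * (1 - 1/2) ^ 7 := by norm_num
  refine ⟨⟨?_, ?_⟩, ?_⟩
  · intro h
    have := h (a := 13/20) (b := 43/50) (by constructor <;> norm_num)
      (by constructor <;> norm_num) (by norm_num)
    rw [ratioK, ratioK, div_le_div_iff₀ d1 d2] at this
    norm_num at this
  · intro h
    have := h (a := 1/2) (b := 13/20) (by constructor <;> norm_num)
      (by constructor <;> norm_num) (by norm_num)
    rw [ratioK, ratioK, div_le_div_iff₀ d1 d3] at this
    norm_num at this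
  · -- find a ∈ [0.76, 0.77] with ratioK a = 28
    have h1 : (28:ℝ) ∈ Icc (ratioK (77/100)) (ratioK (19/25)) := by
      have da : (0:ℝ) < (77/100:ℝ) ^ 7 * (1 - 77/100) + 7 * (1 - 77/100) ^ 7 := by norm_num
      have db : (0:ℝ) < (19/25:ℝ) ^ 7 * (1 - 19/25) + 7 * (1 - 19/25) ^ 7 := by norm_num
      constructor
      · rw [ratioK, div_le_iff₀ da]; norm_num
      · rw [ratioK, le_div_iff₀ db]; norm_num
    have h2 : (28:ℝ) ∈ Icc (ratioK (23/25)) (ratioK (93/100)) := by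
      have da : (0:ℝ) < (23/25:ℝ) ^ 7 * (1 - 23/25) + 7 * (1 - 23/25) ^ 7 := by norm_num
      have db : (0:ℝ) < (93/100:ℝ) ^ 7 * (1 - 93/100) + 7 * (1 - 93/100) ^ 7 := by norm_num
      constructor
      · rw [ratioK, div_le_iff₀ da]; norm_num
      · rw [ratioK, le_div_iff₀ db]; norm_num
    obtain ⟨a, haI, haK⟩ := intermediate_value_Icc' (by norm_num : (19/25:ℝ) ≤ 77/100)
      (contK (by norm_num) (by norm_num)) h1
    obtain ⟨b, hbI, hbK⟩ := intermediate_value_Icc (by norm_num : (23/25:ℝ) ≤ 93/100)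
      (contK (by norm_num) (by norm_num)) h2
    have ha0 : (0:ℝ) < a := by have := haI.1; linarith [haI.1]
    have ha1 : a < 1 := by linarith [haI.2]
    have hb0 : (0:ℝ) < b := by linarith [hbI.1]
    have hb1 : b < 1 := by linarith [hbI.2]
    have key : ∀ x : ℝ, 0 < x → x < 1 → ratioK x = 28 →
        tauBE (x, 1 - x) = (28/29, 1/29) := by
      intro x hx0 hx1 hk
      have hd := denpos hx0 hx1
      have hN : x + 7 * x ^ 7 * (1 - x) = 28 * (x ^ 7 * (1 - x) + 7 * (1 - x) ^ 7) := by
        rw [ratioK, div_eq_iff (ne_of_gt hd)] at hk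
        linarith
      simp only [tauBE, Prod.mk.injEq]
      rw [hN]
      constructor
      · rw [show (28:ℝ) * (x ^ 7 * (1 - x) + 7 * (1 - x) ^ 7) + (x ^ 7 * (1 - x) + 7 * (1 - x) ^ 7)
            = 29 * (x ^ 7 * (1 - x) + 7 * (1 - x) ^ 7) by ring]
        rw [mul_div_mul_right _ _ (ne_of_gt hd)]
      · rw [show (28:ℝ) * (x ^ 7 * (1 - x) + 7 * (1 - x) ^ 7) + (x ^ 7 * (1 - x) + 7 * (1 - x) ^ 7)
            = 29 * (x ^ 7 * (1 - x) + 7 * (1 - x) ^ 7) by ring]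
        rw [div_eq_div_iff (by positivity) (by norm_num)]
        ring
    intro h
    have hne : a ≠ b := by intro e; rw [e] at haI; linarith [haI.2, hbI.1]
    have hmem : ∀ x : ℝ, 0 < x → x < 1 → (x, 1 - x) ∈ {p : ℝ × ℝ | 0 ≤ p.1 ∧ 0 ≤ p.2 ∧ p.1 + p.2 = 1} := by
      intro x hx0 hx1
      exact ⟨le_of_lt hx0, by simp only; linarith, by simp only; ring⟩
    have := h (hmem a ha0 ha1) (hmem b hb0 hb1)
      (by rw [key a ha0 ha1 haK, key b hb0 hb1 hbK])
    exact hne (congrArg Prod.fst this)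
end

section
/- There exists a polynomial P with positive coefficients containing a strictly positive monomial in each variable (namely P = x₁ + x₁⁷x₂ + x₂⁷ on the 1-simplex) such that the Baum–Eagon map associated to P is not a homeomorphism of the simplex onto itself. -/
open MvPolynomial

/-- The 1-simplex in `ℝ²` (coordinates indexed by `Fin 2`). -/
def delta1 : Set (Fin 2 → ℝ) := {x | (∀ i, 0 ≤ x i) ∧ x 0 + x 1 = 1}

/-- The Baum–Eagon map on the simplex for a polynomial `P` in two variables. -/
noncomputable def tauOf (P : MvPolynomial (Fin 2) ℝ) (x : Fin 2 → ℝ) : Fin 2 → ℝ :=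
  fun i => x i * eval x (pderiv i P) / ∑ j : Fin 2, x j * eval x (pderiv j P)

/-!
Along the edge `t ↦ (t, 1 - t)` of the simplex, the first coordinate of the Baum–Eagon map of
`P = x₀ + x₀⁷x₁ + x₁⁷` is continuous but not monotone: it takes the value `1` at `t = 1`, and
its value at `t = 9/10` lies below both that and its value at `t = 7/10`. A continuous injective
function on an interval is strictly monotone, so the map is not injective on the simplex.
-/

open Set

theorem ContinuousOn.not_injOn_Icc_of_lt_of_lt {α δ : Type*} [ConditionallyCompleteLinearOrder α]
    [DenselyOrdered α] [TopologicalSpace α] [OrderTopology α] [LinearOrder δ] [TopologicalSpace δ]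
    [OrderClosedTopology δ] {f : α → δ} {a b c : α} (hf : ContinuousOn f (Icc a c))
    (hab : a ≤ b) (hbc : b ≤ c) (hfa : f b < f a) (hfc : f b < f c) : ¬ InjOn f (Icc a c) := by
  intro hinj
  have hb : b ∈ Icc a c := ⟨hab, hbc⟩
  rcases hf.strictMonoOn_of_injOn_Icc' (hab.trans hbc) hinj with hmono | hanti
  · exact hfa.not_ge (hmono.monotoneOn ⟨le_rfl, hab.trans hbc⟩ hb hab)
  · exact hfc.not_ge (hanti.antitoneOn hb ⟨hab.trans hbc, le_rfl⟩ hbc)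

theorem continuousOn_tauOf (P : MvPolynomial (Fin 2) ℝ) (i : Fin 2) :
    ContinuousOn (fun x => tauOf P x i) {x | ∑ j, x j * eval x (pderiv j P) ≠ 0} := by
  have hcont := fun j => continuous_eval (pderiv j P)
  exact ContinuousOn.div (by fun_prop) (by fun_prop) fun _ hx => hx

theorem vecCons_mem_delta1 {t : ℝ} (ht : t ∈ Icc (0 : ℝ) 1) : ![t, 1 - t] ∈ delta1 :=
  ⟨fun i => by fin_cases i <;> simp [ht.1, ht.2], by simp⟩

theorem injOn_edge_of_injOn_delta1 {f : (Fin 2 → ℝ) → Fin 2 → ℝ}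
    (hmaps : MapsTo f delta1 delta1) (hinj : InjOn f delta1) :
    InjOn (fun t => f ![t, 1 - t] 0) (Icc 0 1) := by
  intro s hs t ht hst
  have hfs := hmaps (vecCons_mem_delta1 hs)
  have hft := hmaps (vecCons_mem_delta1 ht)
  have hf : f ![s, 1 - s] = f ![t, 1 - t] := by
    funext i
    fin_cases i
    · exact hst
    · simp only [Fin.mk_one]
      linarith [hfs.2, hft.2, show f ![s, 1 - s] 0 = f ![t, 1 - t] 0 from hst]
  simpa using congrFun (hinj (vecCons_mem_delta1 hs) (vecCons_mem_delta1 ht) hf) 0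

noncomputable def baumEagonCounterexample : MvPolynomial (Fin 2) ℝ := X 0 + X 0 ^ 7 * X 1 + X 1 ^ 7

namespace baumEagonCounterexample

theorem coeff_eq (m : Fin 2 →₀ ℕ) :
    baumEagonCounterexample.coeff m =
      (if Finsupp.single 0 1 = m then 1 else 0) +
      (if Finsupp.single 0 7 + Finsupp.single 1 1 = m then 1 else 0) +
      (if Finsupp.single 1 7 = m then 1 else 0) := by
  simp [baumEagonCounterexample, X, monomial_pow, monomial_mul, coeff_monomial]

theorem coeff_nonneg (m : Fin 2 →₀ ℕ) : 0 ≤ baumEagonCounterexample.coeff m := by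
  rw [coeff_eq]
  positivity

theorem exists_coeff_single_pos :
    ∀ i : Fin 2, ∃ w : ℕ, 0 < w ∧ 0 < baumEagonCounterexample.coeff (Finsupp.single i w) := by
  refine Fin.forall_fin_two.2 ⟨⟨1, one_pos, ?_⟩, ⟨7, by norm_num, ?_⟩⟩ <;>
  · simp only [coeff_eq, if_pos]
    positivity

theorem eval_pderiv_zero (x : Fin 2 → ℝ) :
    eval x (pderiv 0 baumEagonCounterexample) = 1 + 7 * x 0 ^ 6 * x 1 := by
  simp [baumEagonCounterexample]
  ring

theorem eval_pderiv_one (x : Fin 2 → ℝ) :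
    eval x (pderiv 1 baumEagonCounterexample) = x 0 ^ 7 + 7 * x 1 ^ 6 := by
  simp [baumEagonCounterexample]

theorem sum_mul_eval_pderiv_pos {x : Fin 2 → ℝ} (hx : x ∈ delta1) :
    0 < ∑ j, x j * eval x (pderiv j baumEagonCounterexample) := by
  obtain ⟨hnonneg, hsum⟩ := hx
  have hx1 := hnonneg 1
  simp only [Fin.sum_univ_two, eval_pderiv_zero, eval_pderiv_one]
  rcases (hnonneg 0).lt_or_eq with hpos | hzero
  · positivity
  · have hone : x 1 = 1 := by linarith
    rw [← hzero, hone]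
    norm_num

theorem continuousOn_tauOf_edge :
    ContinuousOn (fun t => tauOf baumEagonCounterexample ![t, 1 - t] 0) (Icc 0 1) :=
  (continuousOn_tauOf _ 0).comp (by fun_prop) fun _ ht =>
    (sum_mul_eval_pderiv_pos (vecCons_mem_delta1 ht)).ne'

theorem tauOf_edge_lt :
    tauOf baumEagonCounterexample ![9 / 10, 1 - 9 / 10] 0 <
        tauOf baumEagonCounterexample ![7 / 10, 1 - 7 / 10] 0 ∧
      tauOf baumEagonCounterexample ![9 / 10, 1 - 9 / 10] 0 <
        tauOf baumEagonCounterexample ![1, 1 - 1] 0 := by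
  norm_num [tauOf, Fin.sum_univ_two, eval_pderiv_zero, eval_pderiv_one]

end baumEagonCounterexample

open baumEagonCounterexample in
/-- **Counterexample to Baum's conjecture.** There exists a polynomial `P` with
non-negative coefficients which contains a monomial `c_i x_i^{w_i}` with `c_i > 0`,
`w_i > 0` for each variable (e.g. `P = x₁ + x₁⁷x₂ + x₂⁷`), whose associated
Baum–Eagon map is not a homeomorphism of the 1-simplex onto itself. -/
theorem exists_poly_baumEagon_not_homeomorph :
    ∃ P : MvPolynomial (Fin 2) ℝ,
      (∀ m, 0 ≤ P.coeff m) ∧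
      (∀ i : Fin 2, ∃ w : ℕ, 0 < w ∧ 0 < P.coeff (Finsupp.single i w)) ∧
      ¬ ∃ h : delta1 ≃ₜ delta1, ∀ p : delta1, (h p : Fin 2 → ℝ) = tauOf P p := by
  refine ⟨baumEagonCounterexample, coeff_nonneg, exists_coeff_single_pos, ?_⟩
  rintro ⟨h, hh⟩
  have hmaps : MapsTo (tauOf baumEagonCounterexample) delta1 delta1 := fun p hp =>
    hh ⟨p, hp⟩ ▸ (h ⟨p, hp⟩).2
  have hinj : InjOn (tauOf baumEagonCounterexample) delta1 := fun p hp q hq hpq =>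
    congrArg Subtype.val <| h.injective (a₁ := ⟨p, hp⟩) (a₂ := ⟨q, hq⟩) <|
      Subtype.ext <| (hh ⟨p, hp⟩).trans <| hpq.trans (hh ⟨q, hq⟩).symm
  have hsub : Icc (7 / 10 : ℝ) 1 ⊆ Icc 0 1 := Icc_subset_Icc (by norm_num) le_rfl
  exact (continuousOn_tauOf_edge.mono hsub).not_injOn_Icc_of_lt_of_lt (b := 9 / 10)
    (by norm_num) (by norm_num) tauOf_edge_lt.1 tauOf_edge_lt.2
    ((injOn_edge_of_injOn_delta1 hmaps hinj).mono hsub)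
end

section
/- For any twice continuously differentiable function P on a neighborhood of the compact product of simplices D, there exists δ > 0 such that for all 0 < ε < δ, the MWU map T_ε (i.e., the Baum–Eagon map of Q = Σ_{ij}x_{ij} + εP) is a diffeomorphism of D (in projected coordinates) onto its image. -/
/-!
At `ε = 0` the map `T_ε` is the identity, and `(ε, x) ↦ T_ε x` is `C¹` near `{0} × D` because
`P` is `C²`. By compactness of `D` (the tube lemma), for small `ε` the derivative of `T_ε` stays
within `1/2` of the identity uniformly on `D`. On the convex set `D` the mean value inequality
then makes `T_ε - id` a `1/2`-Lipschitz map, so `T_ε` is injective with a Lipschitz inverse on its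
image, and that inverse is differentiable because every derivative of `T_ε` on `D` is invertible.
-/

/-- The product of `N` simplices with `M` coordinates each. -/
def simplexProd (N M : ℕ) : Set (Fin N × Fin M → ℝ) :=
  {x | (∀ a, 0 ≤ x a) ∧ ∀ i : Fin N, ∑ j : Fin M, x (i, j) = 1}

/-- The MWU map with stepsize `ε`, i.e. the Baum–Eagon map of `Q = ∑_{ij} x_{ij} + ε P`. -/
noncomputable def mwuMap {N M : ℕ} (P : (Fin N × Fin M → ℝ) → ℝ) (ε : ℝ)
    (x : Fin N × Fin M → ℝ) : Fin N × Fin M → ℝ :=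
  fun a =>
    x a * (1 + ε * fderiv ℝ P x (Pi.single a 1)) /
      (1 + ε * ∑ s : Fin M, x (a.1, s) * fderiv ℝ P x (Pi.single (a.1, s) 1))

open Set Filter Topology Function
open scoped NNReal

section

variable {E F : Type*} [NormedAddCommGroup E] [NormedSpace ℝ E] [NormedAddCommGroup F]
  [NormedSpace ℝ F]

theorem Convex.approximatesLinearOn_of_norm_fderiv_sub_le {f : E → F} {φ : E →L[ℝ] F}
    {s : Set E} {c : ℝ≥0} (hs : Convex ℝ s) (hf : ∀ x ∈ s, DifferentiableAt ℝ f x)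
    (hf' : ∀ x ∈ s, ‖fderiv ℝ f x - φ‖ ≤ c) : ApproximatesLinearOn f φ s c :=
  fun _ hx _ hy =>
    hs.norm_image_sub_le_of_norm_hasFDerivWithin_le'
      (fun z hz => (hf z hz).hasFDerivAt.hasFDerivWithinAt) hf' hy hx

theorem subsingleton_or_lt_inv_nnnorm_refl_symm {c : ℝ≥0} (hc : c < 1) :
    Subsingleton E ∨ c < ‖((ContinuousLinearEquiv.refl ℝ E).symm : E →L[ℝ] E)‖₊⁻¹ := by
  rcases subsingleton_or_nontrivial E with hE | hE
  · exact .inl hE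
  · right
    simpa [ContinuousLinearMap.nnnorm_id] using hc

theorem HasFDerivWithinAt.of_leftInvOn {f : E → F} {g : F → E} {f' : E ≃L[ℝ] F}
    {s : Set E} {x : E} (hx : x ∈ s) (hf : HasFDerivWithinAt f (f' : E →L[ℝ] F) s x)
    (hg : ContinuousOn g (f '' s)) (hgf : LeftInvOn g f s) :
    HasFDerivWithinAt g (f'.symm : F →L[ℝ] E) (f '' s) (f x) := by
  have hmem : f x ∈ f '' s := mem_image_of_mem f hx
  have hmaps : ∀ y ∈ f '' s, g y ∈ s ∧ f (g y) = y := by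
    rintro _ ⟨z, hz, rfl⟩
    rw [hgf hz]
    exact ⟨hz, rfl⟩
  refine HasFDerivWithinAt.of_local_left_inverse (t := s) ?_ (by rwa [hgf hx]) hmem
    (eventually_nhdsWithin_of_forall fun y hy => (hmaps y hy).2)
  exact tendsto_nhdsWithin_iff.2
    ⟨hg _ hmem, eventually_nhdsWithin_of_forall fun y hy => (hmaps y hy).1⟩

theorem ContinuousLinearMap.exists_equiv_of_norm_sub_one_lt [CompleteSpace E] {A : E →L[ℝ] E}
    (hA : ‖A - 1‖ < 1) : ∃ e : E ≃L[ℝ] E, (e : E →L[ℝ] E) = A := by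
  have hunit : IsUnit A := by
    by_contra h
    exact nonunits.subset_compl_ball h (by rwa [Metric.mem_ball, dist_eq_norm])
  exact ⟨ContinuousLinearEquiv.unitsEquiv ℝ E hunit.unit, by ext; simp⟩

theorem Convex.injOn_and_exists_differentiable_leftInvOn [CompleteSpace E] {f : E → E}
    {s : Set E} {c : ℝ≥0} (hs : Convex ℝ s) (hf : ∀ x ∈ s, DifferentiableAt ℝ f x)
    (hc : c < 1) (hf' : ∀ x ∈ s, ‖fderiv ℝ f x - ContinuousLinearMap.id ℝ E‖ ≤ c) :
    InjOn f s ∧ ∃ g : E → E, (∀ x ∈ s, g (f x) = x) ∧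
      ∀ y ∈ f '' s, DifferentiableWithinAt ℝ g (f '' s) y := by
  have happrox : ApproximatesLinearOn f (ContinuousLinearEquiv.refl ℝ E : E →L[ℝ] E) s c := by
    rw [ContinuousLinearEquiv.coe_refl]
    exact hs.approximatesLinearOn_of_norm_fderiv_sub_le hf hf'
  have hc' := subsingleton_or_lt_inv_nnnorm_refl_symm (E := E) hc
  set g := (happrox.toPartialEquiv hc').symm
  have hgf : LeftInvOn g f s := fun x hx => (happrox.toPartialEquiv hc').left_inv hx
  refine ⟨happrox.injOn hc', g, hgf, ?_⟩
  rintro _ ⟨x, hx, rfl⟩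
  obtain ⟨e, he⟩ := ContinuousLinearMap.exists_equiv_of_norm_sub_one_lt
    ((hf' x hx).trans_lt (by exact_mod_cast hc))
  have hfx : HasFDerivWithinAt f (e : E →L[ℝ] E) s x := by
    rw [he]
    exact (hf x hx).hasFDerivAt.hasFDerivWithinAt
  exact (hfx.of_leftInvOn hx (happrox.inverse_continuousOn hc') hgf).differentiableWithinAt

theorem eventually_differentiableAt_and_norm_fderiv_sub_id_lt {G : Type*}
    [NormedAddCommGroup G] [NormedSpace ℝ G] {f : G → E → E} {p₀ : G} {x₀ : E}
    (hf : ContDiffAt ℝ 1 (uncurry f) (p₀, x₀)) (h₀ : f p₀ = id) {c : ℝ} (hc : 0 < c) :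
    ∀ᶠ q : G × E in 𝓝 (p₀, x₀), DifferentiableAt ℝ (f q.1) q.2 ∧
      ‖fderiv ℝ (f q.1) q.2 - ContinuousLinearMap.id ℝ E‖ < c := by
  have hdiff : ∀ᶠ q : G × E in 𝓝 (p₀, x₀), DifferentiableAt ℝ (f q.1) q.2 := by
    filter_upwards [hf.eventually (by simp)] with q hq
    exact (hq.comp q.2 (contDiffAt_const.prodMk contDiffAt_id)).differentiableAt one_ne_zero
  have hcont : ContinuousAt (fun q : G × E => fderiv ℝ (f q.1) q.2) (p₀, x₀) := by
    refine (ContDiffAt.fderiv (m := 0) (n := 1) ?_ contDiffAt_snd (by simp)).continuousAt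
    exact ContDiffAt.comp ((p₀, x₀), x₀) (f := fun r : (G × E) × E => (r.1.1, r.2)) hf
      (by fun_prop)
  have hnear : ∀ᶠ q : G × E in 𝓝 (p₀, x₀),
      ‖fderiv ℝ (f q.1) q.2 - ContinuousLinearMap.id ℝ E‖ < c :=
    (hcont.sub continuousAt_const).norm.eventually_lt continuousAt_const (by simpa [h₀])
  exact hdiff.and hnear

theorem IsCompact.exists_pos_forall_norm_fderiv_sub_id_lt {f : ℝ → E → E} {K : Set E}
    (hK : IsCompact K) (hf : ∀ x ∈ K, ContDiffAt ℝ 1 (uncurry f) (0, x)) (h₀ : f 0 = id)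
    {c : ℝ} (hc : 0 < c) :
    ∃ δ > 0, ∀ ε : ℝ, |ε| < δ → ∀ x ∈ K, DifferentiableAt ℝ (f ε) x ∧
      ‖fderiv ℝ (f ε) x - ContinuousLinearMap.id ℝ E‖ < c := by
  obtain ⟨δ, hδ, h⟩ := Metric.eventually_nhds_iff.1 <| hK.eventually_forall_of_forall_eventually
    (P := fun ε x => DifferentiableAt ℝ (f ε) x ∧
      ‖fderiv ℝ (f ε) x - ContinuousLinearMap.id ℝ E‖ < c)
    fun x hx => eventually_differentiableAt_and_norm_fderiv_sub_id_lt (hf x hx) h₀ hc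
  exact ⟨δ, hδ, fun ε hε => h (by rwa [Real.dist_0_eq_abs])⟩

end

theorem convex_simplexProd (N M : ℕ) : Convex ℝ (simplexProd N M) := by
  intro x hx y hy a b ha hb hab
  refine ⟨fun c => ?_, fun i => ?_⟩
  · have := hx.1 c
    have := hy.1 c
    simp only [Pi.add_apply, Pi.smul_apply, smul_eq_mul]
    positivity
  · simp only [Pi.add_apply, Pi.smul_apply, smul_eq_mul]
    rw [Finset.sum_add_distrib, ← Finset.mul_sum, ← Finset.mul_sum, hx.2 i, hy.2 i]
    simpa using hab

theorem isCompact_simplexProd (N M : ℕ) : IsCompact (simplexProd N M) := by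
  have hclosed : IsClosed (simplexProd N M) := by
    simp only [simplexProd, ofPred_and, ofPred_forall]
    exact (isClosed_iInter fun a => isClosed_le continuous_const (continuous_apply a)).inter
      (isClosed_iInter fun i => isClosed_eq (by fun_prop) continuous_const)
  refine (isCompact_Icc (a := 0) (b := 1)).of_isClosed_subset hclosed
    fun x hx => ⟨hx.1, fun a => ?_⟩
  calc x a ≤ ∑ s : Fin M, x (a.1, s) :=
        Finset.single_le_sum (f := fun s => x (a.1, s)) (fun s _ => hx.1 _) (Finset.mem_univ a.2)
    _ = 1 := hx.2 a.1

theorem mwuMap_zero {N M : ℕ} (P : (Fin N × Fin M → ℝ) → ℝ) : mwuMap P 0 = id := by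
  ext x a
  simp [mwuMap]

theorem contDiffAt_uncurry_mwuMap {N M : ℕ} {P : (Fin N × Fin M → ℝ) → ℝ}
    {x : Fin N × Fin M → ℝ} (hP : ContDiffAt ℝ 2 P x) :
    ContDiffAt ℝ 1 (uncurry (mwuMap P)) (0, x) := by
  have hgrad : ContDiffAt ℝ 1 (fun p : ℝ × (Fin N × Fin M → ℝ) => fderiv ℝ P p.2) (0, x) :=
    (hP.fderiv_right (m := 1) le_rfl).comp _ contDiffAt_snd
  rw [contDiffAt_pi]
  intro a
  refine ContDiffAt.div ?_ ?_ (by simp)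
  · fun_prop
  · fun_prop

/-- **For small enough stepsize, MWU is a diffeomorphism onto its image:** for any
twice continuously differentiable `P` on a neighborhood `U` of the product of
simplices `D`, there is `δ > 0` such that for all `0 < ε < δ`, the map `T_ε` is
injective on `D`, differentiable on `D`, and has a differentiable inverse on
`T_ε '' D`. -/
theorem mwu_is_diffeomorphism (N M : ℕ)
    (P : (Fin N × Fin M → ℝ) → ℝ) (U : Set (Fin N × Fin M → ℝ))
    (hU : IsOpen U) (hDU : simplexProd N M ⊆ U)
    (hP : ContDiffOn ℝ 2 P U) :
    ∃ δ > (0 : ℝ), ∀ ε : ℝ, 0 < ε → ε < δ →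
      Set.InjOn (mwuMap P ε) (simplexProd N M) ∧
      (∀ x ∈ simplexProd N M, DifferentiableAt ℝ (mwuMap P ε) x) ∧
      ∃ g : (Fin N × Fin M → ℝ) → (Fin N × Fin M → ℝ),
        (∀ x ∈ simplexProd N M, g (mwuMap P ε x) = x) ∧
        ∀ y ∈ mwuMap P ε '' simplexProd N M,
          DifferentiableWithinAt ℝ g (mwuMap P ε '' simplexProd N M) y := by
  obtain ⟨δ, hδ, hnear⟩ := (isCompact_simplexProd N M).exists_pos_forall_norm_fderiv_sub_id_lt
    (fun x hx => contDiffAt_uncurry_mwuMap (hP.contDiffAt (hU.mem_nhds (hDU hx))))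
    (mwuMap_zero P) (c := 1 / 2) (by norm_num)
  refine ⟨δ, hδ, fun ε hε hεδ => ?_⟩
  have hT := hnear ε (by rwa [abs_of_pos hε])
  obtain ⟨hinj, g, hg, hgd⟩ := (convex_simplexProd N M).injOn_and_exists_differentiable_leftInvOn
    (fun x hx => (hT x hx).1) (c := 1 / 2) (by norm_num) fun x hx => by
      exact_mod_cast (hT x hx).2.le
  exact ⟨hinj, fun x hx => (hT x hx).1, g, hg, hgd⟩
end

section
/- Every point y ∈ D that violates the first-order KKT conditions but is a fixed point of MWU has the property that the projected Jacobian of the MWU map at y has an eigenvalue of absolute value strictly greater than 1. Concretely: if y_{ij} = 0 and ∂P/∂x_{ij}(y) > Σ_{j'} y_{ij'} ∂P/∂x_{ij'}(y), then the projected Jacobian at y has the eigenvalue (1 + ε_i ∂P/∂x_{ij}(y)) / (1 + ε_i Σ_{j'} y_{ij'} ∂P/∂x_{ij'}(y)) > 1. -/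
/-- The MWU map with per-player stepsizes `ε i`:
`T(x)_{ij} = x_{ij}(1 + ε_i ∂P/∂x_{ij}(x)) / (1 + ε_i ∑_s x_{is} ∂P/∂x_{is}(x))`. -/
noncomputable def mwuMapE {N M : ℕ} (P : (Fin N × Fin M → ℝ) → ℝ) (ε : Fin N → ℝ)
    (x : Fin N × Fin M → ℝ) : Fin N × Fin M → ℝ :=
  fun a =>
    x a * (1 + ε a.1 * fderiv ℝ P x (Pi.single a 1)) /
      (1 + ε a.1 * ∑ s : Fin M, x (a.1, s) * fderiv ℝ P x (Pi.single (a.1, s) 1))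

open Matrix Module.End

section LeftEigenvector

variable {R n : Type*} [CommRing R] [IsDomain R] [Fintype n] [DecidableEq n]

theorem hasEigenvalue_toLin'_transpose_iff (A : Matrix n n R) (μ : R) :
    HasEigenvalue (toLin' Aᵀ) μ ↔ HasEigenvalue (toLin' A) μ := by
  rw [hasEigenvalue_iff_isRoot_charpoly, hasEigenvalue_iff_isRoot_charpoly, charpoly_toLin',
    charpoly_toLin', charpoly_transpose]

theorem hasEigenvalue_toLin'_of_vecMul_eq_smul {A : Matrix n n R} {μ : R} {v : n → R}
    (hv : v ≠ 0) (hvA : v ᵥ* A = μ • v) : HasEigenvalue (toLin' A) μ := by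
  rw [← hasEigenvalue_toLin'_transpose_iff]
  refine hasEigenvalue_of_hasEigenvector ⟨?_, hv⟩
  rwa [mem_eigenspace_iff, toLin'_apply, mulVec_transpose]

theorem hasEigenvalue_toLin'_of_row_eq_smul_single {A : Matrix n n R} {μ : R} (k : n)
    (hA : A.row k = μ • Pi.single k 1) : HasEigenvalue (toLin' A) μ :=
  hasEigenvalue_toLin'_of_vecMul_eq_smul (Pi.single_ne_zero_iff.mpr one_ne_zero)
    (by rw [single_one_vecMul, hA])

end LeftEigenvector

theorem fderiv_apply_mul_of_apply_eq_zero {𝕜 ι : Type*} [NontriviallyNormedField 𝕜]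
    [Fintype ι] {g : (ι → 𝕜) → 𝕜} {y : ι → 𝕜} {a : ι} (hg : DifferentiableAt 𝕜 g y)
    (hya : y a = 0) (v : ι → 𝕜) :
    fderiv 𝕜 (fun x => x a * g x) y v = g y * v a := by
  rw [fderiv_fun_mul (differentiableAt_apply a y) hg]
  simp [(hasFDerivAt_apply a y).fderiv, hya]

theorem ContDiffAt.differentiableAt_fderiv_apply {E F : Type*} [NormedAddCommGroup E]
    [NormedSpace ℝ E] [NormedAddCommGroup F] [NormedSpace ℝ F] {P : E → F} {y : E}
    (hP : ContDiffAt ℝ 2 P y) (v : E) : DifferentiableAt ℝ (fun x => fderiv ℝ P x v) y :=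
  ((hP.fderiv_right (by norm_num)).differentiableAt one_ne_zero).clm_apply
    (differentiableAt_const v)

section MWU

variable {N M : ℕ} {P : (Fin N × Fin M → ℝ) → ℝ} {ε : Fin N → ℝ}

noncomputable def mwuFactor (P : (Fin N × Fin M → ℝ) → ℝ) (ε : Fin N → ℝ)
    (x : Fin N × Fin M → ℝ) (a : Fin N × Fin M) : ℝ :=
  (1 + ε a.1 * fderiv ℝ P x (Pi.single a 1)) /
    (1 + ε a.1 * ∑ s : Fin M, x (a.1, s) * fderiv ℝ P x (Pi.single (a.1, s) 1))

theorem mwuMapE_apply (x : Fin N × Fin M → ℝ) (a : Fin N × Fin M) :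
    mwuMapE P ε x a = x a * mwuFactor P ε x a :=
  mul_div_assoc _ _ _

theorem differentiableAt_mwuFactor {y : Fin N × Fin M → ℝ} (hP : ContDiffAt ℝ 2 P y)
    (a : Fin N × Fin M)
    (hden : 1 + ε a.1 * ∑ s : Fin M, y (a.1, s) * fderiv ℝ P y (Pi.single (a.1, s) 1) ≠ 0) :
    DifferentiableAt ℝ (fun x => mwuFactor P ε x a) y := by
  have hdP := hP.differentiableAt_fderiv_apply
  unfold mwuFactor
  fun_prop (disch := assumption)

theorem fderiv_mwuMapE_apply_of_eq_zero {y : Fin N × Fin M → ℝ} (hP : ContDiffAt ℝ 2 P y)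
    {a : Fin N × Fin M} (hya : y a = 0)
    (hden : 1 + ε a.1 * ∑ s : Fin M, y (a.1, s) * fderiv ℝ P y (Pi.single (a.1, s) 1) ≠ 0)
    (v : Fin N × Fin M → ℝ) :
    fderiv ℝ (fun x => mwuMapE P ε x a) y v = mwuFactor P ε y a * v a := by
  simp only [mwuMapE_apply]
  exact fderiv_apply_mul_of_apply_eq_zero (differentiableAt_mwuFactor hP a hden) hya v

end MWU

theorem mwu_non_first_order_stationary_unstable_general (N M : ℕ)
    (P : (Fin N × Fin M → ℝ) → ℝ) (U : Set (Fin N × Fin M → ℝ))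
    (hU : IsOpen U) (hDU : simplexProd N M ⊆ U)
    (hP : ContDiffOn ℝ 2 P U)
    (ε : Fin N → ℝ) (hε : ∀ i, 0 < ε i)
    (y : Fin N × Fin M → ℝ) (hy : y ∈ simplexProd N M)
    (hden : ∀ i : Fin N,
      0 < 1 + ε i * ∑ s : Fin M, y (i, s) * fderiv ℝ P y (Pi.single (i, s) 1))
    (i : Fin N) (j : Fin M)
    (hzero : y (i, j) = 0)
    (hviol : fderiv ℝ P y (Pi.single (i, j) 1) >
      ∑ j' : Fin M, y (i, j') * fderiv ℝ P y (Pi.single (i, j') 1)) :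
    1 < (1 + ε i * fderiv ℝ P y (Pi.single (i, j) 1)) /
          (1 + ε i * ∑ j' : Fin M, y (i, j') * fderiv ℝ P y (Pi.single (i, j') 1)) ∧
    Module.End.HasEigenvalue
      (Matrix.toLin'
        (Matrix.of fun a b : Fin N × Fin M =>
          fderiv ℝ (fun x => mwuMapE P ε x a) y (Pi.single b 1)))
      ((1 + ε i * fderiv ℝ P y (Pi.single (i, j) 1)) /
        (1 + ε i * ∑ j' : Fin M, y (i, j') * fderiv ℝ P y (Pi.single (i, j') 1))) := by
  have hPy : ContDiffAt ℝ 2 P y := hP.contDiffAt (hU.mem_nhds (hDU hy))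
  refine ⟨(one_lt_div (hden i)).2 (by gcongr; exact hε i), ?_⟩
  refine hasEigenvalue_toLin'_of_row_eq_smul_single (i, j) (funext fun b => ?_)
  rw [row_apply, of_apply, fderiv_mwuMapE_apply_of_eq_zero hPy hzero (hden i).ne']
  simp [mwuFactor, Pi.single_apply, eq_comm]

/-- **Fixed points violating first-order KKT are unstable.** If `y` is a fixed point of
MWU with `y_{ij} = 0` and `∂P/∂x_{ij}(y) > ∑_{j'} y_{ij'} ∂P/∂x_{ij'}(y)`, then the
Jacobian of the MWU map at `y` has the eigenvalue
`(1 + ε_i ∂P/∂x_{ij}(y)) / (1 + ε_i ∑_{j'} y_{ij'} ∂P/∂x_{ij'}(y))`, which is `> 1`. -/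
theorem mwu_non_first_order_stationary_unstable (N M : ℕ)
    (P : (Fin N × Fin M → ℝ) → ℝ) (U : Set (Fin N × Fin M → ℝ))
    (hU : IsOpen U) (hDU : simplexProd N M ⊆ U)
    (hP : ContDiffOn ℝ 2 P U)
    (ε : Fin N → ℝ) (hε : ∀ i, 0 < ε i)
    (y : Fin N × Fin M → ℝ) (hy : y ∈ simplexProd N M)
    (hfix : mwuMapE P ε y = y)
    (hden : ∀ i : Fin N,
      0 < 1 + ε i * ∑ s : Fin M, y (i, s) * fderiv ℝ P y (Pi.single (i, s) 1))
    (i : Fin N) (j : Fin M)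
    (hzero : y (i, j) = 0)
    (hviol : fderiv ℝ P y (Pi.single (i, j) 1) >
      ∑ j' : Fin M, y (i, j') * fderiv ℝ P y (Pi.single (i, j') 1)) :
    1 < (1 + ε i * fderiv ℝ P y (Pi.single (i, j) 1)) /
          (1 + ε i * ∑ j' : Fin M, y (i, j') * fderiv ℝ P y (Pi.single (i, j') 1)) ∧
    Module.End.HasEigenvalue
      (Matrix.toLin'
        (Matrix.of fun a b : Fin N × Fin M =>
          fderiv ℝ (fun x => mwuMapE P ε x a) y (Pi.single b 1)))
      ((1 + ε i * fderiv ℝ P y (Pi.single (i, j) 1)) /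
        (1 + ε i * ∑ j' : Fin M, y (i, j') * fderiv ℝ P y (Pi.single (i, j') 1))) :=
  mwu_non_first_order_stationary_unstable_general N M P U hU hDU hP ε hε y hy hden i j hzero hviol
end

section
/- If y is a fixed point of the MWU dynamics with all stepsizes ε_i > 0 and all denominators nonzero, then y satisfies: for every i, j, either y_{ij} = 0 or ∂P/∂x_{ij}(y) = Σ_{j'} y_{ij'} ∂P/∂x_{ij'}(y). In particular, every interior fixed point of MWU is a first-order stationary point of P on D. -/
/-- **Fixed points of MWU satisfy the complementarity condition.** If `y` is a fixed
point of MWU with positive stepsizes and nonzero denominators, then for every `i, j`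
either `y_{ij} = 0` or `∂P/∂x_{ij}(y) = ∑_{j'} y_{ij'} ∂P/∂x_{ij'}(y)`. In particular,
every interior fixed point of MWU is a first-order stationary point of `P` on `D`. -/
theorem mwu_fixed_point_complementarity (N M : ℕ)
    (P : (Fin N × Fin M → ℝ) → ℝ)
    (ε : Fin N → ℝ) (hε : ∀ i, 0 < ε i)
    (y : Fin N × Fin M → ℝ) (hy : y ∈ simplexProd N M)
    (hden : ∀ i : Fin N,
      1 + ε i * ∑ s : Fin M, y (i, s) * fderiv ℝ P y (Pi.single (i, s) 1) ≠ 0)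
    (hfix : mwuMapE P ε y = y) :
    (∀ i j, y (i, j) = 0 ∨
        fderiv ℝ P y (Pi.single (i, j) 1) =
          ∑ j' : Fin M, y (i, j') * fderiv ℝ P y (Pi.single (i, j') 1)) ∧
    ((∀ a, 0 < y a) → ∀ i j,
        fderiv ℝ P y (Pi.single (i, j) 1) =
          ∑ j' : Fin M, y (i, j') * fderiv ℝ P y (Pi.single (i, j') 1)) := by
  have main : ∀ i j, y (i, j) = 0 ∨
      fderiv ℝ P y (Pi.single (i, j) 1) =
        ∑ j' : Fin M, y (i, j') * fderiv ℝ P y (Pi.single (i, j') 1) := by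
    intro i j
    have h := congrFun hfix (i, j)
    simp only [mwuMapE] at h
    have hd := hden i
    rw [div_eq_iff hd] at h
    rcases eq_or_ne (y (i, j)) 0 with h0 | h0
    · exact Or.inl h0
    · right
      have hne : (ε i : ℝ) ≠ 0 := (hε i).ne'
      have : fderiv ℝ P y (Pi.single (i, j) 1)
          - ∑ s : Fin M, y (i, s) * fderiv ℝ P y (Pi.single (i, s) 1) = 0 := by
        have h2 : y (i, j) * (ε i * (fderiv ℝ P y (Pi.single (i, j) 1)
            - ∑ s : Fin M, y (i, s) * fderiv ℝ P y (Pi.single (i, s) 1))) = 0 := by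
          ring_nf
          ring_nf at h
          linarith
        rcases mul_eq_zero.mp h2 with h3 | h3
        · exact absurd h3 h0
        · rcases mul_eq_zero.mp h3 with h4 | h4
          · exact absurd h4 hne
          · exact h4
      linarith [this]
  exact ⟨main, fun hpos i j => (main i j).resolve_left (hpos (i, j)).ne'⟩
end
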